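/- For every natural number n ≥ 1, the center of the semigroup Sₙ = ⟨a, b | a^{n+1} = b² = 0, aba = 0, b aⁱ b = 0 ∀ i ≥ 1⟩ equals {0, aⁿb, b aⁿ}. -/

import Mathlib

/-!
The generators `a`, `b` act on the left of the set of normal forms `0, aʲ, aʲb, baʲ⁺¹`
(the empty word included) by the obvious rules. The defining relations hold for this action,
so it is an action of `Sₙ`, and evaluating normal forms in `Sₙ¹` is equivariant. Hence every
element is the evaluation of its action on the empty word, and the action separates elements.
As `a` and `b` generate, `x` is central iff it commutes with both; comparing the forms of
`xa, ax` and `xb, bx` leaves only `0`, `aⁿb` and `baⁿ`, which are central by the relations.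
-/

/-- The commuting graph of a semigroup: vertices are the non-central
elements, two distinct vertices are adjacent iff they commute. -/
def CommutingGraph (S : Type*) [Semigroup S] :
    SimpleGraph {x : S // x ∉ Set.center S} where
  Adj a b := a ≠ b ∧ (a : S) * b = (b : S) * a
  symm := ⟨fun _ _ ⟨h, hc⟩ => ⟨h.symm, hc.symm⟩⟩
  loopless := ⟨fun _ ⟨h, _⟩ => h rfl⟩

/-- The free semigroup with zero on the two generators `a = of false`, `b = of true`. -/
abbrev W2 := WithZero (FreeSemigroup Bool)

/-- The generator `a`. -/
def ga : FreeSemigroup Bool := FreeSemigroup.of false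

/-- The generator `b`. -/
def gb : FreeSemigroup Bool := FreeSemigroup.of true

/-- `fsPow x k = x^(k+1)` (positive powers in a semigroup). -/
def fsPow (x : FreeSemigroup Bool) : ℕ → FreeSemigroup Bool
  | 0 => x
  | k + 1 => fsPow x k * x

/-- `apow i` is `a^i` for `i ≥ 1` (junk value `a` at `i = 0`). -/
def apow (i : ℕ) : FreeSemigroup Bool := fsPow ga (i - 1)

/-- The defining relations of `Sₙ`: `a^(n+1) = b² = 0`, `aba = 0`, `b aⁱ b = 0` for `i ≥ 1`. -/
def SnRel (n : ℕ) : W2 → W2 → Prop := fun p q =>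
  (p = ((apow (n + 1) : FreeSemigroup Bool) : W2) ∧ q = 0) ∨
  (p = ((gb * gb : FreeSemigroup Bool) : W2) ∧ q = 0) ∨
  (p = ((ga * gb * ga : FreeSemigroup Bool) : W2) ∧ q = 0) ∨
  (∃ i : ℕ, 1 ≤ i ∧ p = ((gb * apow i * gb : FreeSemigroup Bool) : W2) ∧ q = 0)

/-- The congruence generated by the relations of `Sₙ`. -/
def SnCon (n : ℕ) : Con W2 := conGen (SnRel n)

/-- The semigroup `Sₙ = ⟨a, b | a^(n+1) = b² = 0, aba = baⁱb = 0 ∀ i ≥ 1⟩`. -/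
def Sn (n : ℕ) : Type := (SnCon n).Quotient

instance (n : ℕ) : Semigroup (Sn n) := Con.semigroup _

/-- The canonical projection onto `Sₙ`. -/
def smk (n : ℕ) : W2 → Sn n := (SnCon n).toQuotient

namespace Sn

theorem induction_on {n : ℕ} {p : Sn n → Prop} (x : Sn n) (zero : p (smk n 0))
    (of : ∀ c, p (smk n ((FreeSemigroup.of c : FreeSemigroup Bool) : W2)))
    (mul : ∀ x y, p x → p y → p (x * y)) : p x := by
  refine Con.induction_on x fun w => ?_
  induction w using WithZero.recZeroCoe with
  | zero => exact zero
  | coe u =>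
    induction u using FreeSemigroup.recOnMul with
    | ih1 c => exact of c
    | ih2 c u _ hu => exact mul _ _ (of c) hu

theorem smk_eq_of_rel (n : ℕ) {p q : W2} (h : SnRel n p q) : smk n p = smk n q :=
  (SnCon n).eq.2 (ConGen.Rel.of p q h)

variable (n : ℕ)

/- The relations are stated in the monoid `Sₙ¹`, where `aⁱ` needs no junk value at `i = 0`. -/
def A : WithOne (Sn n) := ((smk n (ga : W2) : Sn n) : WithOne (Sn n))
def B : WithOne (Sn n) := ((smk n (gb : W2) : Sn n) : WithOne (Sn n))
def Z : WithOne (Sn n) := ((smk n 0 : Sn n) : WithOne (Sn n))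

variable {n}

theorem coe_smk_mul (x y : FreeSemigroup Bool) :
    ((smk n ((x * y : FreeSemigroup Bool) : W2) : Sn n) : WithOne (Sn n)) =
      (smk n (x : W2) : WithOne (Sn n)) * (smk n (y : W2) : WithOne (Sn n)) := rfl

theorem coe_smk_fsPow (k : ℕ) :
    ((smk n ((fsPow ga k : FreeSemigroup Bool) : W2) : Sn n) : WithOne (Sn n)) =
      A n ^ (k + 1) := by
  induction k with
  | zero => exact (pow_one _).symm
  | succ k ih => rw [fsPow, coe_smk_mul, ih, pow_succ _ (k + 1)]; rfl

theorem coe_smk_apow {i : ℕ} (hi : 1 ≤ i) :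
    ((smk n ((apow i : FreeSemigroup Bool) : W2) : Sn n) : WithOne (Sn n)) = A n ^ i := by
  rw [apow, coe_smk_fsPow, Nat.sub_add_cancel hi]

theorem Z_mul (y : WithOne (Sn n)) : Z n * y = Z n := by
  induction y using WithOne.recOneCoe with
  | one => exact mul_one _
  | coe x =>
    refine Con.induction_on x fun w => ?_
    exact congrArg WithOne.coe (congrArg (smk n) (zero_mul w))

theorem mul_Z (y : WithOne (Sn n)) : y * Z n = Z n := by
  induction y using WithOne.recOneCoe with
  | one => exact one_mul _
  | coe x =>
    refine Con.induction_on x fun w => ?_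
    exact congrArg WithOne.coe (congrArg (smk n) (mul_zero w))

theorem A_pow_succ_self : A n ^ (n + 1) = Z n := by
  rw [← coe_smk_apow (Nat.le_add_left 1 n), smk_eq_of_rel n (Or.inl ⟨rfl, rfl⟩)]; rfl

theorem A_pow_of_lt {k : ℕ} (hk : n < k) : A n ^ k = Z n := by
  rw [← Nat.add_sub_of_le hk, pow_add, A_pow_succ_self, Z_mul]

theorem B_mul_B : B n * B n = Z n :=
  congrArg WithOne.coe (smk_eq_of_rel n (Or.inr (Or.inl ⟨rfl, rfl⟩)))

theorem A_mul_B_mul_A : A n * B n * A n = Z n :=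
  congrArg WithOne.coe (smk_eq_of_rel n (Or.inr (Or.inr (Or.inl ⟨rfl, rfl⟩))))

theorem B_mul_A_pow_mul_B {i : ℕ} (hi : 1 ≤ i) : B n * A n ^ i * B n = Z n := by
  rw [← coe_smk_apow hi]
  exact congrArg WithOne.coe (smk_eq_of_rel n (Or.inr (Or.inr (Or.inr ⟨i, hi, rfl, rfl⟩))))

theorem A_pow_mul_B_mul_A_pow {i j : ℕ} (hi : 1 ≤ i) (hj : 1 ≤ j) :
    A n ^ i * B n * A n ^ j = Z n := by
  obtain ⟨i, rfl⟩ := Nat.exists_eq_add_of_le' hi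
  obtain ⟨j, rfl⟩ := Nat.exists_eq_add_of_le hj
  calc A n ^ (i + 1) * B n * A n ^ (1 + j) = A n ^ i * (A n * B n * A n) * A n ^ j := by
        rw [pow_succ, pow_add, pow_one]; simp only [mul_assoc]
    _ = Z n := by rw [A_mul_B_mul_A, mul_Z, Z_mul]

/-- Normal forms of the elements of `Sₙ¹`: `a j`, `ab j` and `ba j` stand for `aʲ`, `aʲb` and
`b aʲ⁺¹`; `a 0` is the identity. -/
inductive Form
  | zero
  | a (j : ℕ)
  | ab (j : ℕ)
  | ba (j : ℕ)

namespace Form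

variable (n : ℕ)

def mulA : Form → Form
  | zero => zero
  | a j => if j < n then a (j + 1) else zero
  | ab j => if j < n then ab (j + 1) else zero
  | ba _ => zero

def mulB : Form → Form
  | a 0 => ab 0
  | a (j + 1) => ba j
  | _ => zero

variable {n}

theorem mulA_iterate_zero (k : ℕ) : (mulA n)^[k] zero = zero :=
  Function.iterate_fixed rfl k

theorem mulA_iterate_succ_a (k j : ℕ) :
    (mulA n)^[k + 1] (a j) = if j + k < n then a (j + k + 1) else zero := by
  induction k with
  | zero => rfl
  | succ k ih =>
    rw [Function.iterate_succ_apply', ih]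
    grind [mulA]

theorem mulA_iterate_succ_ab (k j : ℕ) :
    (mulA n)^[k + 1] (ab j) = if j + k < n then ab (j + k + 1) else zero := by
  induction k with
  | zero => rfl
  | succ k ih =>
    rw [Function.iterate_succ_apply', ih]
    grind [mulA]

theorem mulA_iterate_succ_ba (k j : ℕ) : (mulA n)^[k + 1] (ba j) = zero := by
  rw [Function.iterate_succ_apply]; exact mulA_iterate_zero k

theorem mulA_iterate_succ_self (s : Form) : (mulA n)^[n + 1] s = zero := by
  cases s with
  | zero => exact mulA_iterate_zero _
  | a j => rw [mulA_iterate_succ_a, if_neg (by omega)]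
  | ab j => rw [mulA_iterate_succ_ab, if_neg (by omega)]
  | ba j => exact mulA_iterate_succ_ba _ _

theorem mulB_mulB : ∀ s : Form, mulB (mulB s) = zero
  | zero | a 0 | a (_ + 1) | ab _ | ba _ => rfl

theorem mulA_mulB_mulA (s : Form) : mulA n (mulB (mulA n s)) = zero := by
  cases s with
  | zero | ba _ => rfl
  | a j | ab j => simp only [mulA]; split_ifs <;> rfl

theorem mulB_mulA_iterate_succ_mulB (k : ℕ) :
    ∀ s : Form, mulB ((mulA n)^[k + 1] (mulB s)) = zero
  | a 0 => by rw [mulB, mulA_iterate_succ_ab]; split_ifs <;> rfl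
  | a (j + 1) => by rw [mulB, mulA_iterate_succ_ba]; rfl
  | zero | ab _ | ba _ => by simp only [mulB, mulA_iterate_zero]

variable (n)

def emb : Form → WithOne (Sn n)
  | zero => Z n
  | a j => A n ^ j
  | ab j => A n ^ j * B n
  | ba j => B n * A n ^ (j + 1)

variable {n}

theorem emb_mulA (s : Form) : emb n (mulA n s) = A n * emb n s := by
  cases s with
  | zero => exact (mul_Z _).symm
  | a j =>
    by_cases h : j < n
    · simp only [mulA, if_pos h, emb, pow_succ']
    · simp only [mulA, if_neg h, emb]
      rw [← pow_succ', A_pow_of_lt (by omega)]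
  | ab j =>
    by_cases h : j < n
    · simp only [mulA, if_pos h, emb, pow_succ', mul_assoc]
    · simp only [mulA, if_neg h, emb]
      rw [← mul_assoc, ← pow_succ', A_pow_of_lt (by omega), Z_mul]
  | ba j =>
    simp only [mulA, emb]
    rw [pow_succ', ← mul_assoc, ← mul_assoc, A_mul_B_mul_A, Z_mul]

theorem emb_mulB (s : Form) : emb n (mulB s) = B n * emb n s :=
  match s with
  | zero => (mul_Z _).symm
  | a 0 => (mul_one _).symm
  | a (_ + 1) => rfl
  | ab 0 => by simp only [mulB, emb, pow_zero, one_mul, B_mul_B]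
  | ab (j + 1) => by
    simp only [mulB, emb, ← mul_assoc, B_mul_A_pow_mul_B (Nat.le_add_left 1 j)]
  | ba _ => by simp only [mulB, emb, ← mul_assoc, B_mul_B, Z_mul]

end Form

open Form

variable (n : ℕ)

def genAct : FreeSemigroup Bool →ₙ* Function.End Form :=
  FreeSemigroup.lift fun c => if c then mulB else mulA n

variable {n}

theorem genAct_apply_zero (w : FreeSemigroup Bool) : genAct n w zero = zero := by
  induction w using FreeSemigroup.recOnMul with
  | ih1 c => cases c <;> rfl
  | ih2 c w _ hw =>
    rw [map_mul]
    show genAct n (FreeSemigroup.of c) (genAct n w zero) = zero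
    rw [hw]; cases c <;> rfl

theorem genAct_fsPow (k : ℕ) : genAct n (fsPow ga k) = (mulA n)^[k + 1] := by
  induction k with
  | zero => rfl
  | succ k ih =>
    rw [show fsPow ga (k + 1) = fsPow ga k * ga from rfl, map_mul, ih]
    exact (Function.iterate_succ _ _).symm

theorem genAct_apow {i : ℕ} (hi : 1 ≤ i) : genAct n (apow i) = (mulA n)^[i] := by
  rw [apow, genAct_fsPow, Nat.sub_add_cancel hi]

variable (n)

def wordAct : W2 →ₙ* Function.End Form where
  toFun := WithZero.recZeroCoe (fun _ => zero) (genAct n)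
  map_mul' x y := by
    induction x using WithZero.recZeroCoe with
    | zero => rfl
    | coe u =>
      induction y using WithZero.recZeroCoe with
      | zero => funext s; exact (genAct_apply_zero u).symm
      | coe v => exact map_mul (genAct n) u v

variable {n}

theorem wordAct_coe (w : FreeSemigroup Bool) : wordAct n w = genAct n w := rfl

theorem snCon_le_ker_wordAct : SnCon n ≤ Con.ker (wordAct n) := by
  refine Con.conGen_le.2 ?_
  rintro p q (⟨rfl, rfl⟩ | ⟨rfl, rfl⟩ | ⟨rfl, rfl⟩ | ⟨i, hi, rfl, rfl⟩) <;>
    show wordAct n _ = wordAct n 0 <;> funext s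
  · rw [wordAct_coe, genAct_apow (by omega)]
    exact mulA_iterate_succ_self s
  · exact mulB_mulB s
  · exact mulA_mulB_mulA s
  · rw [wordAct_coe, map_mul, map_mul, genAct_apow hi]
    obtain ⟨k, rfl⟩ := Nat.exists_eq_add_of_le' hi
    exact mulB_mulA_iterate_succ_mulB k s

variable (n)

def act : Sn n →ₙ* Function.End Form where
  toFun x := Con.liftOn x (wordAct n) fun _ _ h => snCon_le_ker_wordAct h
  map_mul' x y := Con.induction_on₂ x y fun u v => map_mul (wordAct n) u v

variable {n}

theorem emb_act (x : Sn n) (s : Form) : emb n (act n x s) = x * emb n s := by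
  induction x using Sn.induction_on generalizing s with
  | zero => exact (Z_mul _).symm
  | of c =>
    cases c
    · exact emb_mulA s
    · exact emb_mulB s
  | mul x y hx hy =>
    rw [WithOne.coe_mul, mul_assoc, ← hy, ← hx, map_mul]
    rfl

theorem lift_act_mul_apply (y z : WithOne (Sn n)) (s : Form) :
    WithOne.lift (act n) (y * z) s = WithOne.lift (act n) y (WithOne.lift (act n) z s) := by
  rw [map_mul]; rfl

theorem lift_act_A_pow_apply (j : ℕ) (s : Form) :
    WithOne.lift (act n) (A n ^ j) s = (mulA n)^[j] s := by
  rw [map_pow]; rfl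

theorem lift_act_B_apply (s : Form) : WithOne.lift (act n) (B n) s = mulB s := rfl

theorem emb_lift_act (y : WithOne (Sn n)) (s : Form) :
    emb n (WithOne.lift (act n) y s) = y * emb n s := by
  induction y using WithOne.recOneCoe with
  | one => exact (one_mul _).symm
  | coe x => exact emb_act x s

/-- `hA` and `hB` say that `emb n s` commutes with `a` and `b`, compared on normal forms. -/
theorem emb_eq_of_lift_act_emb {s : Form} (h0 : s ≠ a 0)
    (hA : WithOne.lift (act n) (emb n s) (a 1) = mulA n s)
    (hB : WithOne.lift (act n) (emb n s) (ab 0) = mulB s) :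
    emb n s = Z n ∨ emb n s = A n ^ n * B n ∨ emb n s = B n * A n ^ n := by
  cases s with
  | zero => exact Or.inl rfl
  | a j =>
    obtain _ | j := j
    · exact absurd rfl h0
    refine Or.inl (A_pow_of_lt (Nat.lt_of_not_le fun hj => ?_))
    simp [emb, lift_act_A_pow_apply, mulA_iterate_succ_ab, mulB, Nat.lt_of_succ_le hj] at hB
  | ab j =>
    rcases lt_trichotomy j n with hj | hj | hj
    · simp only [emb, lift_act_mul_apply, lift_act_A_pow_apply, lift_act_B_apply, mulB, mulA,
        if_pos hj] at hA
      obtain _ | j := j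
      · simp at hA
      · simp [mulA_iterate_succ_ba] at hA
    · exact Or.inr (Or.inl (by rw [emb, hj]))
    · exact Or.inl ((congrArg (· * B n) (A_pow_of_lt hj)).trans (Z_mul _))
  | ba j =>
    rcases lt_trichotomy (j + 1) n with hj | hj | hj
    · simp [emb, lift_act_mul_apply, lift_act_A_pow_apply, lift_act_B_apply,
        mulA_iterate_succ_a, mulA, mulB, show 1 + j < n by omega] at hA
    · exact Or.inr (Or.inr (by rw [emb, hj]))
    · exact Or.inl ((congrArg (B n * ·) (A_pow_of_lt hj)).trans (mul_Z _))

variable (n) in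
def nf (y : WithOne (Sn n)) : Form := WithOne.lift (act n) y (a 0)

theorem emb_nf (y : WithOne (Sn n)) : emb n (nf n y) = y :=
  (emb_lift_act y (a 0)).trans (mul_one y)

theorem nf_mul (y z : WithOne (Sn n)) : nf n (y * z) = WithOne.lift (act n) y (nf n z) :=
  lift_act_mul_apply y z (a 0)

theorem nf_A (hn : 1 ≤ n) : nf n (A n) = a 1 := if_pos hn

theorem nf_B : nf n (B n) = ab 0 := rfl

theorem Z_commute (y : WithOne (Sn n)) : Commute (Z n) y :=
  (Z_mul y).trans (mul_Z y).symm

theorem commute_A_pow_mul_B (hn : 1 ≤ n) :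
    Commute (A n ^ n * B n) (A n) ∧ Commute (A n ^ n * B n) (B n) := by
  constructor
  · calc A n ^ n * B n * A n = Z n := by
          simpa only [pow_one] using A_pow_mul_B_mul_A_pow hn le_rfl
      _ = A n * (A n ^ n * B n) := by
          rw [← mul_assoc, ← pow_succ', A_pow_succ_self, Z_mul]
  · calc A n ^ n * B n * B n = Z n := by rw [mul_assoc, B_mul_B, mul_Z]
      _ = B n * (A n ^ n * B n) := by rw [← mul_assoc, B_mul_A_pow_mul_B hn]

theorem commute_B_mul_A_pow (hn : 1 ≤ n) :
    Commute (B n * A n ^ n) (A n) ∧ Commute (B n * A n ^ n) (B n) := by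
  constructor
  · calc B n * A n ^ n * A n = Z n := by
          rw [mul_assoc, ← pow_succ, A_pow_succ_self, mul_Z]
      _ = A n * (B n * A n ^ n) := by
          simpa only [pow_one, mul_assoc] using (A_pow_mul_B_mul_A_pow le_rfl hn).symm
  · calc B n * A n ^ n * B n = Z n := B_mul_A_pow_mul_B hn
      _ = B n * (B n * A n ^ n) := by rw [← mul_assoc, B_mul_B, Z_mul]

theorem commute_A_and_B_iff (hn : 1 ≤ n) {y : WithOne (Sn n)} (hy : y ≠ 1) :
    Commute y (A n) ∧ Commute y (B n) ↔
      y = Z n ∨ y = A n ^ n * B n ∨ y = B n * A n ^ n := by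
  constructor
  · rintro ⟨hA, hB⟩
    have key : ∀ z, Commute y z →
        WithOne.lift (act n) (emb n (nf n y)) (nf n z) = WithOne.lift (act n) z (nf n y) :=
      fun z h => by rw [emb_nf, ← nf_mul, ← nf_mul, h.eq]
    rw [← emb_nf y] at hy ⊢
    refine emb_eq_of_lift_act_emb (fun h => hy (by rw [h]; rfl)) ?_ ?_
    · rw [← nf_A hn]; exact key _ hA
    · rw [← nf_B]; exact key _ hB
  · rintro (rfl | rfl | rfl)
    · exact ⟨Z_commute _, Z_commute _⟩
    · exact commute_A_pow_mul_B hn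
    · exact commute_B_mul_A_pow hn

theorem mem_center_iff_commute {x : Sn n} :
    x ∈ Set.center (Sn n) ↔
      Commute (x : WithOne (Sn n)) (A n) ∧ Commute (x : WithOne (Sn n)) (B n) := by
  simp only [Semigroup.mem_center_iff, Commute, SemiconjBy, A, B, ← WithOne.coe_mul,
    WithOne.coe_inj]
  refine ⟨fun h => ⟨(h _).symm, (h _).symm⟩, fun ⟨hA, hB⟩ g => ?_⟩
  show Commute g x
  induction g using Sn.induction_on with
  | zero => exact WithOne.coe_injective (Z_commute (x : WithOne (Sn n)))
  | of c =>
    cases c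
    · exact hA.symm
    · exact hB.symm
  | mul g h hg hh => exact hg.mul_left hh

end Sn

theorem Sn_center (n : ℕ) (hn : 1 ≤ n) :
    Set.center (Sn n) =
      {smk n 0, smk n ((apow n * gb : FreeSemigroup Bool) : W2),
        smk n ((gb * apow n : FreeSemigroup Bool) : W2)} := by
  ext x
  rw [Sn.mem_center_iff_commute, Sn.commute_A_and_B_iff hn WithOne.coe_ne_one]
  simp only [Sn.Z, Sn.B, ← Sn.coe_smk_apow hn, ← Sn.coe_smk_mul, WithOne.coe_inj,
    Set.mem_insert_iff, Set.mem_singleton_iff]
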